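/- arXiv:1210.3251 — 4 statements merged into one kernel-verified Lean document; each statement's English description precedes it below -/
import Mathlib

section
/- Let X be a topological space in which every point has a neighbourhood base of compact sets, and let Y and Z be subsets of X which are Lindelöf in the relative topology. Define, for a subset S of X, S^1 to be the set of points that cannot be separated from some point of S by disjoint open sets. Then the following are equivalent: (i) the closure of Y^1 does not meet Z and the closure of Z^1 does not meet Y; (ii) there exist disjoint open subsets U and V of X with Y ⊆ U and Z ⊆ V. -/
/-- Two points cannot be separated by disjoint open sets. -/
def Insep {X : Type*} [TopologicalSpace X] (p q : X) : Prop :=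
  ¬ ∃ U V : Set X, IsOpen U ∧ IsOpen V ∧ p ∈ U ∧ q ∈ V ∧ Disjoint U V

/-- `sepOne S` is the set `S^1` of points which cannot be separated from some point of `S`
by disjoint open sets. -/
def sepOne {X : Type*} [TopologicalSpace X] (S : Set X) : Set X :=
  {p | ∃ s ∈ S, Insep p s}

lemma compact_sep {X : Type*} [TopologicalSpace X] {K : Set X} (hK : IsCompact K) {z : X}
    (h : ∀ k ∈ K, ¬ Insep k z) : ∃ B : Set X, IsOpen B ∧ z ∈ B ∧ B ∩ K = ∅ := by
  choose A B hA hB hkA hzB hd using fun k : K => not_not.mp (h k k.2)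
  have hcover : K ⊆ ⋃ k : K, A k := fun k hk => Set.mem_iUnion.mpr ⟨⟨k, hk⟩, hkA _⟩
  obtain ⟨t, ht⟩ := hK.elim_finite_subcover A hA hcover
  refine ⟨⋂ k ∈ t, B k, isOpen_biInter_finset (fun k _ => hB k), Set.mem_iInter₂.mpr
    (fun k _ => hzB k), ?_⟩
  ext x
  simp only [Set.mem_inter_iff, Set.mem_iInter, Set.mem_empty_iff_false, iff_false, not_and, Set.mem_iInter]
  intro hxB hxK
  obtain ⟨k, hkt, hxA⟩ := Set.mem_iUnion₂.mp (ht hxK)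
  exact Set.disjoint_left.mp (hd k) hxA (hxB k hkt)

lemma exists_open_closure_disjoint {X : Type*} [TopologicalSpace X] [LocallyCompactSpace X]
    {Z : Set X} {y : X} (hy : y ∉ closure (sepOne Z)) :
    ∃ U : Set X, IsOpen U ∧ y ∈ U ∧ ∀ z ∈ Z, z ∉ closure U := by
  obtain ⟨K, hKc, hyK, hKW⟩ :=
    exists_compact_subset (isOpen_compl_iff.mpr isClosed_closure) hy
  refine ⟨interior K, isOpen_interior, hyK, fun z hz hcl => ?_⟩
  have hsep : ∀ k ∈ K, ¬ Insep k z := fun k hk hins =>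
    hKW hk (subset_closure ⟨z, hz, hins⟩)
  obtain ⟨B, hB, hzB, hBK⟩ := compact_sep hKc hsep
  obtain ⟨x, hxB, hxK⟩ := (mem_closure_iff.mp hcl) B hB hzB
  exact (Set.eq_empty_iff_forall_notMem.mp hBK) x ⟨hxB, interior_subset hxK⟩

lemma exists_seq_cover {X : Type*} [TopologicalSpace X] {Y Z : Set X} (hY : IsLindelof Y)
    (h : ∀ y ∈ Y, ∃ U : Set X, IsOpen U ∧ y ∈ U ∧ ∀ z ∈ Z, z ∉ closure U) :
    ∃ U : ℕ → Set X, (∀ n, IsOpen (U n)) ∧ (∀ n, ∀ z ∈ Z, z ∉ closure (U n)) ∧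
      Y ⊆ ⋃ n, U n := by
  choose U hUo hyU hUcl using fun y : Y => h y y.2
  have hcover : Y ⊆ ⋃ y : Y, U y := fun y hy => Set.mem_iUnion.mpr ⟨⟨y, hy⟩, hyU _⟩
  obtain ⟨t, htc, hts⟩ := hY.elim_countable_subcover U hUo hcover
  rcases t.eq_empty_or_nonempty with rfl | htne
  · refine ⟨fun _ => ∅, fun _ => isOpen_empty, fun n z _ => by simp, ?_⟩
    intro y hy
    simpa using hts hy
  · obtain ⟨f, rfl⟩ := Set.Countable.exists_eq_range htc htne
    refine ⟨fun n => U (f n), fun n => hUo _, fun n z hz => hUcl _ z hz, ?_⟩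
    intro y hy
    obtain ⟨i, hi, hyi⟩ := Set.mem_iUnion₂.mp (hts hy)
    obtain ⟨n, rfl⟩ := hi
    exact Set.mem_iUnion.mpr ⟨n, hyi⟩

lemma combine_covers {X : Type*} [TopologicalSpace X] {Y Z : Set X} {U V : ℕ → Set X}
    (hU : ∀ n, IsOpen (U n)) (hV : ∀ n, IsOpen (V n))
    (hUZ : ∀ n, ∀ z ∈ Z, z ∉ closure (U n)) (hVY : ∀ n, ∀ y ∈ Y, y ∉ closure (V n))
    (hYU : Y ⊆ ⋃ n, U n) (hZV : Z ⊆ ⋃ n, V n) :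
    ∃ G H : Set X, IsOpen G ∧ IsOpen H ∧ Y ⊆ G ∧ Z ⊆ H ∧ Disjoint G H := by
  set G : Set X := ⋃ n, U n \ ⋃ i ∈ Finset.range (n + 1), closure (V i) with hGdef
  set H : Set X := ⋃ n, V n \ ⋃ i ∈ Finset.range (n + 1), closure (U i) with hHdef
  have hclV : ∀ n, IsClosed (⋃ i ∈ Finset.range (n + 1), closure (V i)) := fun n =>
    (Finset.range (n + 1)).finite_toSet.isClosed_biUnion (fun i _ => isClosed_closure)
  have hclU : ∀ n, IsClosed (⋃ i ∈ Finset.range (n + 1), closure (U i)) := fun n =>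
    (Finset.range (n + 1)).finite_toSet.isClosed_biUnion (fun i _ => isClosed_closure)
  refine ⟨G, H, isOpen_iUnion (fun n => (hU n).sdiff (hclV n)),
    isOpen_iUnion (fun n => (hV n).sdiff (hclU n)), ?_, ?_, ?_⟩
  · intro y hy
    obtain ⟨n, hn⟩ := Set.mem_iUnion.mp (hYU hy)
    exact Set.mem_iUnion.mpr ⟨n, hn, fun hmem => by
      obtain ⟨i, _, hyi⟩ := Set.mem_iUnion₂.mp hmem
      exact hVY i y hy hyi⟩
  · intro z hz
    obtain ⟨n, hn⟩ := Set.mem_iUnion.mp (hZV hz)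
    exact Set.mem_iUnion.mpr ⟨n, hn, fun hmem => by
      obtain ⟨i, _, hzi⟩ := Set.mem_iUnion₂.mp hmem
      exact hUZ i z hz hzi⟩
  · rw [Set.disjoint_left]
    intro x hxG hxH
    obtain ⟨n, hxU, hxnV⟩ := Set.mem_iUnion.mp hxG
    obtain ⟨m, hxV, hxnU⟩ := Set.mem_iUnion.mp hxH
    rcases le_or_gt n m with hnm | hmn
    · exact hxnU (Set.mem_iUnion₂.mpr ⟨n, Finset.mem_range.mpr (Nat.lt_succ_of_le hnm),
        subset_closure hxU⟩)
    · exact hxnV (Set.mem_iUnion₂.mpr ⟨m, Finset.mem_range.mpr (Nat.lt_succ_of_le hmn.le),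
        subset_closure hxV⟩)

/-- Lemma 5.1: in a locally compact space, for Lindelöf subsets `Y`, `Z`, the closures of
`Y^1` and `Z^1` missing `Z` and `Y` respectively is equivalent to separating `Y` and `Z`
by disjoint open sets. -/
theorem closure_sepOne_disjoint_iff_separated {X : Type*} [TopologicalSpace X]
    [LocallyCompactSpace X] {Y Z : Set X} (hY : IsLindelof Y) (hZ : IsLindelof Z) :
    (closure (sepOne Y) ∩ Z = ∅ ∧ closure (sepOne Z) ∩ Y = ∅) ↔
      ∃ U V : Set X, IsOpen U ∧ IsOpen V ∧ Y ⊆ U ∧ Z ⊆ V ∧ Disjoint U V := by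
  constructor
  · rintro ⟨h1, h2⟩
    have hYsep : ∀ y ∈ Y, ∃ U : Set X, IsOpen U ∧ y ∈ U ∧ ∀ z ∈ Z, z ∉ closure U := by
      intro y hy
      exact exists_open_closure_disjoint (fun hmem =>
        (Set.eq_empty_iff_forall_notMem.mp h2) y ⟨hmem, hy⟩)
    have hZsep : ∀ z ∈ Z, ∃ V : Set X, IsOpen V ∧ z ∈ V ∧ ∀ y ∈ Y, y ∉ closure V := by
      intro z hz
      exact exists_open_closure_disjoint (fun hmem =>
        (Set.eq_empty_iff_forall_notMem.mp h1) z ⟨hmem, hz⟩)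
    obtain ⟨U, hUo, hUZ, hYU⟩ := exists_seq_cover hY hYsep
    obtain ⟨V, hVo, hVY, hZV⟩ := exists_seq_cover hZ hZsep
    obtain ⟨G, H, hGo, hHo, hYG, hZH, hGH⟩ := combine_covers hUo hVo hUZ hVY hYU hZV
    exact ⟨G, H, hGo, hHo, hYG, hZH, hGH⟩
  · rintro ⟨U, V, hU, hV, hYU, hZV, hd⟩
    have key : ∀ (S : Set X) (A B : Set X), IsOpen A → IsOpen B → S ⊆ A → Disjoint A B →
        closure (sepOne S) ⊆ Bᶜ := by
      intro S A B hA hB hSA hAB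
      have h1 : sepOne S ⊆ Bᶜ := by
        rintro p ⟨s, hs, hins⟩ hpB
        exact hins ⟨B, A, hB, hA, hpB, hSA hs, hAB.symm⟩
      calc closure (sepOne S) ⊆ closure Bᶜ := closure_mono h1
        _ = Bᶜ := (hB.isClosed_compl).closure_eq
    constructor
    · have := key Y U V hU hV hYU hd
      rw [Set.eq_empty_iff_forall_notMem]
      rintro z ⟨hz1, hz2⟩
      exact this hz1 (hZV hz2)
    · have := key Z V U hV hU hZV hd.symm
      rw [Set.eq_empty_iff_forall_notMem]
      rintro y ⟨hy1, hy2⟩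
      exact this hy1 (hYU hy2)
end

section
/- Let X be a topological space with every point having a neighbourhood base of compact sets, and let K be a compact subset of X. Then the set K^1 = {p ∈ X : p cannot be separated from some point of K by disjoint open sets} is closed in X. -/
/-- If every point of `X` has a neighbourhood base of compact sets and `K` is compact,
then `K^1` is closed. -/
theorem isClosed_sepOne_of_isCompact {X : Type*} [TopologicalSpace X]
    [LocallyCompactSpace X] {K : Set X} (hK : IsCompact K) :
    IsClosed (sepOne K) := by
  rw [← isOpen_compl_iff, isOpen_iff_forall_mem_open]
  intro x hx
  simp only [Set.mem_compl_iff, sepOne, Set.mem_setOf_eq, not_exists] at hx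
  have hx' : ∀ k : K, ∃ U V : Set X, IsOpen U ∧ IsOpen V ∧ x ∈ U ∧ (k : X) ∈ V ∧
      Disjoint U V := fun k => not_not.mp fun h => hx k ⟨k.2, h⟩
  choose U V hU hV hxU hkV hdis using hx'
  obtain ⟨t, ht⟩ := hK.elim_finite_subcover V hV (fun k hk => by
    exact Set.mem_iUnion.mpr ⟨⟨k, hk⟩, hkV ⟨k, hk⟩⟩)
  refine ⟨⋂ i ∈ t, U i, ?_, isOpen_biInter_finset (fun i _ => hU i),
    Set.mem_iInter₂.mpr fun i _ => hxU i⟩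
  intro p hp
  simp only [Set.mem_compl_iff, sepOne, Set.mem_setOf_eq, not_exists]
  rintro k ⟨hk, hins⟩
  obtain ⟨i, hi, hki⟩ := Set.mem_iUnion₂.mp (ht hk)
  exact hins ⟨U i, V i, hU i, hV i, Set.mem_iInter₂.mp hp i hi, hki, hdis i⟩
end

section
/- Let J be a proper closed two-sided ideal of a C*-algebra A and set J̃ = {b ∈ M(A) : bA ∪ Ab ⊆ J}. Then (A + J̃)/J̃ is an essential ideal in M(A)/J̃; consequently, if A/J is unital then A + J̃ = M(A). -/
open MultiplierAlgebra

/-- The strict closure `J̃ = {b ∈ M(A) : bA ⊆ J and Ab ⊆ J}` of an ideal `J` of `A`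
inside the multiplier algebra `M(A)`. -/
noncomputable def strictClosure {A : Type*} [NonUnitalCStarAlgebra A] (J : Set A) :
    Set 𝓜(ℂ, A) :=
  {b | ∀ a : A, b * (a : 𝓜(ℂ, A)) ∈ (fun c : A => (c : 𝓜(ℂ, A))) '' J ∧
    (a : 𝓜(ℂ, A)) * b ∈ (fun c : A => (c : 𝓜(ℂ, A))) '' J}

section Aux

variable {A : Type*} [NonUnitalCStarAlgebra A]

lemma aux_cancel_left {u : A} (h : ∀ d : A, d * u = 0) : u = 0 := by
  have h2 : ‖u‖ * ‖u‖ = 0 := by rw [← CStarRing.norm_star_mul_self, h, norm_zero]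
  exact norm_eq_zero.mp (mul_self_eq_zero.mp h2)

lemma aux_cancel_right {u : A} (h : ∀ d : A, u * d = 0) : u = 0 := by
  have h2 : ‖u‖ * ‖u‖ = 0 := by rw [← CStarRing.norm_self_mul_star, h, norm_zero]
  exact norm_eq_zero.mp (mul_self_eq_zero.mp h2)

lemma aux_fst_mul (x : 𝓜(ℂ, A)) (a c : A) : x.fst (a * c) = x.fst a * c := by
  have key : ∀ d : A, d * (x.fst (a * c) - x.fst a * c) = 0 := by
    intro d
    have h1 : d * x.fst (a * c) = x.snd d * (a * c) := (x.central d (a * c)).symm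
    have h2 : d * (x.fst a * c) = x.snd d * (a * c) := by
      rw [← mul_assoc, ← x.central d a, mul_assoc]
    rw [mul_sub, h1, h2, sub_self]
  exact sub_eq_zero.mp (aux_cancel_left key)

lemma aux_snd_mul (x : 𝓜(ℂ, A)) (a c : A) : x.snd (c * a) = c * x.snd a := by
  have key : ∀ d : A, (x.snd (c * a) - c * x.snd a) * d = 0 := by
    intro d
    have h1 : x.snd (c * a) * d = (c * a) * x.fst d := x.central (c * a) d
    have h2 : (c * x.snd a) * d = (c * a) * x.fst d := by
      rw [mul_assoc, x.central a d, ← mul_assoc]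
    rw [sub_mul, h1, h2, sub_self]
  exact sub_eq_zero.mp (aux_cancel_right key)

lemma aux_mul_coe (x : 𝓜(ℂ, A)) (a : A) :
    x * (a : 𝓜(ℂ, A)) = ((x.fst a : A) : 𝓜(ℂ, A)) := by
  refine DoubleCentralizer.ext ℂ A _ _ (Prod.ext ?_ ?_)
  · ext c
    show (x * (a : 𝓜(ℂ, A))).fst c = ((x.fst a : A) : 𝓜(ℂ, A)).fst c
    rw [DoubleCentralizer.mul_fst, DoubleCentralizer.coe_fst, DoubleCentralizer.coe_fst,
      ContinuousLinearMap.mul_apply, ContinuousLinearMap.mul_apply',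
      ContinuousLinearMap.mul_apply', aux_fst_mul]
  · ext c
    show (x * (a : 𝓜(ℂ, A))).snd c = ((x.fst a : A) : 𝓜(ℂ, A)).snd c
    rw [DoubleCentralizer.mul_snd, DoubleCentralizer.coe_snd, DoubleCentralizer.coe_snd,
      ContinuousLinearMap.mul_apply]
    show (ContinuousLinearMap.mul ℂ A).flip a (x.snd c) = (ContinuousLinearMap.mul ℂ A).flip (x.fst a) c
    show x.snd c * a = c * x.fst a
    exact x.central c a

lemma aux_coe_mul (a : A) (x : 𝓜(ℂ, A)) :
    (a : 𝓜(ℂ, A)) * x = ((x.snd a : A) : 𝓜(ℂ, A)) := by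
  refine DoubleCentralizer.ext ℂ A _ _ (Prod.ext ?_ ?_)
  · ext c
    show ((a : 𝓜(ℂ, A)) * x).fst c = ((x.snd a : A) : 𝓜(ℂ, A)).fst c
    rw [DoubleCentralizer.mul_fst, DoubleCentralizer.coe_fst, DoubleCentralizer.coe_fst,
      ContinuousLinearMap.mul_apply, ContinuousLinearMap.mul_apply',
      ContinuousLinearMap.mul_apply']
    exact (x.central a c).symm
  · ext c
    show ((a : 𝓜(ℂ, A)) * x).snd c = ((x.snd a : A) : 𝓜(ℂ, A)).snd c
    rw [DoubleCentralizer.mul_snd, DoubleCentralizer.coe_snd, DoubleCentralizer.coe_snd,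
      ContinuousLinearMap.mul_apply]
    show x.snd ((ContinuousLinearMap.mul ℂ A).flip a c) = (ContinuousLinearMap.mul ℂ A).flip (x.snd a) c
    show x.snd (c * a) = c * x.snd a
    exact aux_snd_mul x a c

lemma aux_coe_injective : Function.Injective (fun a : A => (a : 𝓜(ℂ, A))) := by
  intro a b h
  have h' : ∀ c : A, a * c = b * c := by
    intro c
    have := congrArg (fun z : 𝓜(ℂ, A) => z.fst c) h
    simpa [ContinuousLinearMap.mul_apply'] using this
  have : ∀ c : A, (a - b) * c = 0 := fun c => by rw [sub_mul, h' c, sub_self]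
  exact sub_eq_zero.mp (aux_cancel_right this)

lemma aux_coe_mul_coe (a b : A) :
    ((a * b : A) : 𝓜(ℂ, A)) = (a : 𝓜(ℂ, A)) * (b : 𝓜(ℂ, A)) :=
  map_mul (DoubleCentralizer.coeHom (𝕜 := ℂ) (A := A)) a b

lemma aux_coe_zero : ((0 : A) : 𝓜(ℂ, A)) = 0 :=
  map_zero (DoubleCentralizer.coeHom (𝕜 := ℂ) (A := A))

lemma aux_coe_sub (a b : A) :
    ((a - b : A) : 𝓜(ℂ, A)) = (a : 𝓜(ℂ, A)) - (b : 𝓜(ℂ, A)) :=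
  map_sub (DoubleCentralizer.coeHom (𝕜 := ℂ) (A := A)) a b

lemma aux_quasi_nonneg (a : A) : ∀ t ∈ quasispectrum ℝ (star a * a), 0 ≤ t := by
  intro t ht
  rw [Unitization.quasispectrum_eq_spectrum_inr' ℝ ℂ] at ht
  have h : ((star a * a : A) : Unitization ℂ A) = star (a : Unitization ℂ A) * a := by
    simp [Unitization.inr_mul, Unitization.inr_star]
  rw [h] at ht
  exact spectrum_star_mul_self_nonneg t ht

lemma aux_approx_right (a : A) : a ∈ closure {y : A | ∃ x : A, y = a * x} := by
  rw [Metric.mem_closure_iff]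
  intro ε hε
  set b := star a * a with hb_def
  have hb : IsSelfAdjoint b := IsSelfAdjoint.star_mul_self a
  have hsp := aux_quasi_nonneg a
  set r : ℝ := 2 / ε ^ 2 with hr_def
  have hr : 0 < r := by positivity
  set f : ℝ → ℝ := fun t => min (r * t) 1 with hf_def
  have hf : Continuous f := (continuous_const.mul continuous_id).min continuous_const
  have hf0 : f 0 = 0 := by simp [hf_def]
  set e := cfcₙ f b with he_def
  have he : IsSelfAdjoint e := cfcₙ_predicate f b
  refine ⟨a * e, ⟨e, rfl⟩, ?_⟩
  rw [dist_eq_norm]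
  have key : ‖a - a * e‖ ^ 2 ≤ ε ^ 2 / 2 := by
    rw [sq, ← CStarRing.norm_star_mul_self]
    have expand : star (a - a * e) * (a - a * e)
        = b - b * e - e * b + e * (b * e) := by
      simp only [hb_def]
      rw [star_sub, star_mul, he.star_eq]
      noncomm_ring
    have e1 : cfcₙ (fun t : ℝ => t * f t) b = b * e := by
      rw [cfcₙ_mul _ _ b (by fun_prop) (by simp) hf.continuousOn hf0, cfcₙ_id' ℝ b]
    have e2 : cfcₙ (fun t : ℝ => f t * t) b = e * b := by
      rw [cfcₙ_mul _ _ b hf.continuousOn hf0 (by fun_prop) (by simp), cfcₙ_id' ℝ b]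
    have e3 : cfcₙ (fun t : ℝ => f t * (t * f t)) b = e * (b * e) := by
      rw [cfcₙ_mul _ _ b hf.continuousOn hf0 (by fun_prop) (by simp [hf0]), e1]
    have e4 : cfcₙ (fun t : ℝ => t - t * f t - f t * t + f t * (t * f t)) b
        = b - b * e - e * b + e * (b * e) := by
      rw [cfcₙ_add _ _ b (by fun_prop) (by simp [hf0]) (by fun_prop) (by simp [hf0]),
        cfcₙ_sub _ _ b (by fun_prop) (by simp [hf0]) (by fun_prop) (by simp [hf0]),
        cfcₙ_sub _ _ b (by fun_prop) (by simp) (by fun_prop) (by simp [hf0]),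
        cfcₙ_id' ℝ b, e1, e2, e3]
    rw [expand, ← e4]
    refine norm_cfcₙ_le fun t ht => ?_
    have ht0 : 0 ≤ t := hsp t ht
    have heq : t - t * f t - f t * t + f t * (t * f t) = t * (1 - f t) ^ 2 := by ring
    rw [heq]
    rcases le_total (r * t) 1 with h1 | h1
    · have hfe : f t = r * t := min_eq_left h1
      rw [hfe, Real.norm_eq_abs, abs_of_nonneg (by nlinarith [sq_nonneg (1 - r * t)])]
      have ht1 : t ≤ ε ^ 2 / 2 := by
        rw [hr_def] at h1
        rw [div_mul_eq_mul_div, div_le_one (by positivity)] at h1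
        linarith
      nlinarith [sq_nonneg (1 - r * t), sq_nonneg (r * t)]
    · have hfe : f t = 1 := min_eq_right h1
      have hz : t * (1 - (1 : ℝ)) ^ 2 = 0 := by ring
      rw [hfe, hz, norm_zero]
      positivity
  have : ‖a - a * e‖ < ε := by
    nlinarith [norm_nonneg (a - a * e)]
  exact this

lemma aux_approx_left (a : A) : a ∈ closure {y : A | ∃ x : A, y = x * a} := by
  have h := aux_approx_right (star a)
  have h2 : star (star a) ∈ closure (star '' {y : A | ∃ x : A, y = star a * x}) :=
    image_closure_subset_closure_image continuous_star ⟨_, h, rfl⟩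
  rw [star_star] at h2
  refine closure_mono ?_ h2
  rintro y ⟨z, ⟨x, rfl⟩, rfl⟩
  exact ⟨star x, by simp [star_mul]⟩

variable (J : TwoSidedIdeal A) (hclosed : IsClosed (J : Set A))

include hclosed in
lemma aux_mem_of_mul_right {u : A} (h : ∀ c : A, u * c ∈ J) : u ∈ J := by
  have hsub : {y : A | ∃ x : A, y = u * x} ⊆ (J : Set A) := by
    rintro y ⟨x, rfl⟩
    exact h x
  have := closure_mono hsub (aux_approx_right u)
  rwa [hclosed.closure_eq] at this

include hclosed in
lemma aux_fst_mem (b : 𝓜(ℂ, A)) {j : A} (hj : j ∈ J) : b.fst j ∈ J := by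
  have h2 : b.fst j ∈ closure (b.fst '' {y : A | ∃ x : A, y = x * j}) :=
    image_closure_subset_closure_image b.fst.continuous ⟨_, aux_approx_left j, rfl⟩
  have hsub : b.fst '' {y : A | ∃ x : A, y = x * j} ⊆ (J : Set A) := by
    rintro y ⟨z, ⟨x, rfl⟩, rfl⟩
    rw [aux_fst_mul]
    exact J.mul_mem_left _ _ hj
  have := closure_mono hsub h2
  rwa [hclosed.closure_eq] at this

end Aux

/-- `(A + J̃)/J̃` is an essential ideal of `M(A)/J̃`: every closed two-sided ideal `K` of
`M(A)` containing `J̃` and strictly larger than `J̃` meets `A + J̃` outside `J̃`.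
Consequently, if `A/J` is unital then `A + J̃ = M(A)`. -/
theorem strictClosure_essential_and_unital {A : Type*} [NonUnitalCStarAlgebra A]
    (J : TwoSidedIdeal A) (hclosed : IsClosed (J : Set A))
    (hproper : (J : Set A) ≠ Set.univ) :
    (∀ K : TwoSidedIdeal 𝓜(ℂ, A), IsClosed (K : Set 𝓜(ℂ, A)) →
      strictClosure (J : Set A) ⊆ (K : Set 𝓜(ℂ, A)) →
      ¬ (K : Set 𝓜(ℂ, A)) ⊆ strictClosure (J : Set A) →
      ∃ b ∈ (K : Set 𝓜(ℂ, A)),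
        (∃ a : A, ∃ j ∈ strictClosure (J : Set A), b = (a : 𝓜(ℂ, A)) + j) ∧
        b ∉ strictClosure (J : Set A)) ∧
    ((∃ p : A, ∀ a : A, a * p - a ∈ J ∧ p * a - a ∈ J) →
      ∀ b : 𝓜(ℂ, A), ∃ a : A, b - (a : 𝓜(ℂ, A)) ∈ strictClosure (J : Set A)) := by
  constructor
  · intro K hK hJK hKJ
    rw [Set.not_subset] at hKJ
    obtain ⟨x, hxK, hxJ⟩ := hKJ
    have zero_mem_sc : (0 : 𝓜(ℂ, A)) ∈ strictClosure (J : Set A) := by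
      intro c
      refine ⟨⟨0, J.zero_mem, by simp [aux_coe_zero]⟩, ⟨0, J.zero_mem, by simp [aux_coe_zero]⟩⟩
    have main : ∀ u : A, (u : 𝓜(ℂ, A)) ∈ K →
        (u : 𝓜(ℂ, A)) ∉ ((fun c : A => (c : 𝓜(ℂ, A))) '' J) →
        ∃ b ∈ (K : Set 𝓜(ℂ, A)),
          (∃ a : A, ∃ j ∈ strictClosure (J : Set A), b = (a : 𝓜(ℂ, A)) + j) ∧
          b ∉ strictClosure (J : Set A) := by
      intro u huK huJ
      refine ⟨(u : 𝓜(ℂ, A)), huK, ⟨u, 0, zero_mem_sc, (add_zero _).symm⟩, ?_⟩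
      intro hmem
      apply huJ
      have huJ' : u ∈ J := by
        apply aux_mem_of_mul_right J hclosed
        intro c
        have h1 := (hmem c).1
        rw [← aux_coe_mul_coe] at h1
        obtain ⟨v, hv, hvu⟩ := h1
        have hveq := aux_coe_injective hvu
        rwa [← hveq]
      exact ⟨u, huJ', rfl⟩
    simp only [strictClosure, Set.mem_setOf_eq, not_forall] at hxJ
    obtain ⟨a, ha⟩ := hxJ
    rw [not_and_or] at ha
    rcases ha with ha | ha
    · rw [aux_mul_coe] at ha
      have hbK : ((x.fst a : A) : 𝓜(ℂ, A)) ∈ K := by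
        rw [← aux_mul_coe]
        exact K.mul_mem_right _ _ hxK
      exact main _ hbK ha
    · rw [aux_coe_mul] at ha
      have hbK : ((x.snd a : A) : 𝓜(ℂ, A)) ∈ K := by
        rw [← aux_coe_mul]
        exact K.mul_mem_left _ _ hxK
      exact main _ hbK ha
  · rintro ⟨p, hp⟩ b
    refine ⟨b.fst p, fun c => ⟨?_, ?_⟩⟩
    · have h1 : (b - ((b.fst p : A) : 𝓜(ℂ, A))) * (c : 𝓜(ℂ, A))
          = ((b.fst (c - p * c) : A) : 𝓜(ℂ, A)) := by
        rw [sub_mul, aux_mul_coe b c, ← aux_coe_mul_coe, map_sub, aux_coe_sub, aux_fst_mul]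
      rw [h1]
      have hmem : c - p * c ∈ J := by
        have := J.neg_mem (hp c).2
        rwa [neg_sub] at this
      exact ⟨_, aux_fst_mem J hclosed b hmem, rfl⟩
    · have h2 : (c : 𝓜(ℂ, A)) * (b - ((b.fst p : A) : 𝓜(ℂ, A)))
          = ((b.snd c - b.snd c * p : A) : 𝓜(ℂ, A)) := by
        rw [mul_sub, aux_coe_mul c b, ← aux_coe_mul_coe, aux_coe_sub, ← b.central c p]
      rw [h2]
      have hmem : b.snd c - b.snd c * p ∈ J := by
        have := J.neg_mem (hp (b.snd c)).1
        rwa [neg_sub] at this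
      exact ⟨_, hmem, rfl⟩
end

section
/- Let A be a C*-algebra, u ∈ A a positive element with ‖u‖ = 1, and Q a primitive ideal of the multiplier algebra M(A) such that A + Q = M(A) and Q ∩ A is proper in A. If u is strictly positive in A, then ‖(1 − u) + Q‖ < 1. -/
open MultiplierAlgebra

/-- A two-sided ideal of a ring is primitive if it is the annihilator of a simple module. -/
def IsPrimitiveIdeal {R : Type*} [Ring R] (P : TwoSidedIdeal R) : Prop :=
  ∃ (M : Type*) (_ : AddCommGroup M) (_ : Module R M),
    IsSimpleModule R M ∧ ∀ r : R, r ∈ P ↔ ∀ m : M, r • m = 0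

section Aux

variable {M : Type*} [CStarAlgebra M] [PartialOrder M] [StarOrderedRing M]

lemma aux_smul_nonneg {r : ℝ} (hr : 0 ≤ r) {a : M} (ha : 0 ≤ a) : 0 ≤ r • a := by
  rw [StarOrderedRing.nonneg_iff] at ha ⊢
  refine AddSubmonoid.closure_induction (fun x hx => ?_) ?_ (fun x y _ _ hx hy => ?_) ha
  · obtain ⟨y, rfl⟩ := hx
    refine AddSubmonoid.subset_closure ⟨Real.sqrt r • y, ?_⟩
    show star (Real.sqrt r • y) * (Real.sqrt r • y) = r • (star y * y)
    rw [star_smul, star_trivial, smul_mul_smul_comm, Real.mul_self_sqrt hr]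
  · rw [smul_zero]; exact zero_mem _
  · rw [smul_add]; exact add_mem hx hy

lemma aux_smul_le {r : ℝ} (hr : 0 ≤ r) {a b : M} (hab : a ≤ b) : r • a ≤ r • b := by
  have h := aux_smul_nonneg hr (sub_nonneg.mpr hab)
  rw [smul_sub] at h
  exact sub_nonneg.mp h

/-- For a selfadjoint element between `-r` and `r`, with `r < 1`, the norm is less than one. -/
lemma aux_norm_lt_one [Nontrivial M] {y : M} {r : ℝ} (hy : IsSelfAdjoint y)
    (h₁ : y ≤ algebraMap ℝ M r) (h₂ : -(algebraMap ℝ M r) ≤ y) (hr : r < 1) : ‖y‖ < 1 := by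
  have hs₁ : ∀ x ∈ spectrum ℝ y, x ≤ r := (le_algebraMap_iff_spectrum_le (ha := hy)).mp h₁
  have hs₂ : ∀ x ∈ spectrum ℝ y, -r ≤ x := by
    have := (algebraMap_le_iff_le_spectrum (r := -r) (a := y) (ha := hy)).mp
      (by rwa [map_neg])
    exact this
  rcases CStarAlgebra.norm_or_neg_norm_mem_spectrum hy with h | h
  · exact lt_of_le_of_lt (hs₁ _ h) hr
  · have := hs₂ _ h
    have : ‖y‖ ≤ r := by linarith
    linarith

end Aux

lemma aux_norm_coe {A : Type*} [NonUnitalCStarAlgebra A] (a : A) :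
    ‖(a : 𝓜(ℂ, A))‖ = ‖a‖ := by
  rw [DoubleCentralizer.norm_def]
  have h1 : (DoubleCentralizer.toProdHom (a : 𝓜(ℂ, A))).1 = ContinuousLinearMap.mul ℂ A a :=
    DoubleCentralizer.coe_fst a
  have h2 : (DoubleCentralizer.toProdHom (a : 𝓜(ℂ, A))).2 =
      (ContinuousLinearMap.mul ℂ A).flip a :=
    DoubleCentralizer.coe_snd a
  rw [Prod.norm_def, h1, h2, ContinuousLinearMap.opNorm_mul_apply,
    ContinuousLinearMap.opNorm_mul_flip_apply, max_self]

set_option maxHeartbeats 1000000 in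
/-- If `u` is a strictly positive element of norm one in `A` and `Q` is a primitive ideal of
`M(A)` with `Q ∩ A` proper and `A + Q = M(A)`, then the quotient norm `‖(1 - u) + Q‖ < 1`,
i.e. there is `q ∈ Q` with `‖1 - u - q‖ < 1`. -/
theorem quotient_norm_one_sub_strictly_positive_lt_one {A : Type*} [NonUnitalCStarAlgebra A]
    [PartialOrder A] [StarOrderedRing A]
    (u : A) (hu0 : 0 ≤ u) (hu1 : ‖u‖ = 1)
    (husp : Dense {x : A | ∃ a : A, x = u * a * u})
    (Q : TwoSidedIdeal 𝓜(ℂ, A)) (hQ : IsPrimitiveIdeal Q)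
    (hQA : {a : A | (a : 𝓜(ℂ, A)) ∈ Q} ≠ Set.univ)
    (hAQ : ∀ b : 𝓜(ℂ, A), ∃ a : A, b - (a : 𝓜(ℂ, A)) ∈ Q) :
    ∃ q ∈ Q, ‖(1 : 𝓜(ℂ, A)) - (u : 𝓜(ℂ, A)) - q‖ < 1 := by
  letI : PartialOrder 𝓜(ℂ, A) := CStarAlgebra.spectralOrder _
  letI : StarOrderedRing 𝓜(ℂ, A) := CStarAlgebra.spectralOrderedRing _
  set φ : A →⋆ₙₐ[ℂ] 𝓜(ℂ, A) := DoubleCentralizer.coeHom (𝕜 := ℂ) (A := A) with hφ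
  have hφ_apply : ∀ a : A, φ a = (a : 𝓜(ℂ, A)) := fun _ => rfl
  -- nontriviality
  have hnt : Nontrivial 𝓜(ℂ, A) := by
    by_contra h
    rw [not_nontrivial_iff_subsingleton] at h
    refine hQA (Set.eq_univ_iff_forall.mpr fun a => ?_)
    have : (a : 𝓜(ℂ, A)) = 0 := Subsingleton.elim _ _
    simpa [Set.mem_setOf_eq, this] using Q.zero_mem
  -- the image of `u`
  set U : 𝓜(ℂ, A) := (u : 𝓜(ℂ, A)) with hU
  have hU0 : (0 : 𝓜(ℂ, A)) ≤ U := by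
    have h := OrderHomClass.mono φ hu0
    rw [map_zero] at h
    exact h
  have hUsa : IsSelfAdjoint U := .of_nonneg hU0
  have hUstar : star U = U := hUsa
  have hUnorm : ‖U‖ = 1 := by rw [hU, aux_norm_coe, hu1]
  have hUle1 : U ≤ 1 := by
    rw [← CStarAlgebra.norm_le_one_iff_of_nonneg U hU0, hUnorm]
  -- produce `v` with `1 - U * v ∈ Q`
  obtain ⟨e, he⟩ := hAQ 1
  obtain ⟨x, hxS, hx⟩ := husp.exists_dist_lt e (by norm_num : (0:ℝ) < 1/2)
  obtain ⟨a, rfl⟩ := hxS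
  have hsnorm : ‖(e - u * a * u : A)‖ < 1/2 := by
    rwa [dist_eq_norm] at hx
  set s : 𝓜(ℂ, A) := ((e - u * a * u : A) : 𝓜(ℂ, A)) with hs
  have hsnorm' : ‖s‖ < 1 := by
    rw [hs, aux_norm_coe]; linarith
  have hcoe_sub : s = (e : 𝓜(ℂ, A)) - U * (a : 𝓜(ℂ, A)) * U := by
    have := map_sub φ e (u * a * u)
    have h2 := map_mul φ (u * a) u
    have h3 := map_mul φ u a
    simp only [hφ_apply] at this h2 h3
    rw [hs, this, h2, h3]
  set w : 𝓜(ℂ, A) := (((Units.oneSub s hsnorm')⁻¹ : (𝓜(ℂ, A))ˣ) : 𝓜(ℂ, A)) with hwdef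
  have hw1 : (1 - s) * w = 1 := by
    have h := (Units.oneSub s hsnorm').mul_inv
    rwa [Units.val_oneSub] at h
  set v : 𝓜(ℂ, A) := (a : 𝓜(ℂ, A)) * U * w with hv
  set c : 𝓜(ℂ, A) := 1 - U * v with hc
  have hcQ : c ∈ Q := by
    have hmem : ((1 : 𝓜(ℂ, A)) - s - U * ((a : 𝓜(ℂ, A)) * U)) ∈ Q := by
      have : (1 : 𝓜(ℂ, A)) - s - U * ((a : 𝓜(ℂ, A)) * U) = 1 - (e : 𝓜(ℂ, A)) := by
        rw [hcoe_sub]; noncomm_ring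
      rw [this]; exact he
    have := Q.mul_mem_right _ w hmem
    have heq : ((1 : 𝓜(ℂ, A)) - s - U * ((a : 𝓜(ℂ, A)) * U)) * w = c := by
      rw [hc, hv]
      have : ((1 : 𝓜(ℂ, A)) - s - U * ((a : 𝓜(ℂ, A)) * U)) * w
          = (1 - s) * w - U * ((a : 𝓜(ℂ, A)) * U * w) := by noncomm_ring
      rw [this, hw1]
    rwa [heq] at this
  -- the key positivity estimate
  set p : 𝓜(ℂ, A) := c * star c with hp
  have hpQ : p ∈ Q := Q.mul_mem_right _ _ hcQ
  have hp0 : (0 : 𝓜(ℂ, A)) ≤ p := mul_star_self_nonneg c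
  have hpsa : star p = p := by rw [hp, star_mul, star_star]
  set Y : 𝓜(ℂ, A) := U * v with hY
  have hcY : c + Y = 1 := by rw [hc]; abel
  have hYsY : Y * star Y ≤ ‖v‖ ^ 2 • (U * U) := by
    have h1 : Y * star Y = U * (v * star v) * star U := by
      rw [hY, star_mul]; rw [hUstar]; noncomm_ring
    have h2 : v * star v ≤ algebraMap ℝ 𝓜(ℂ, A) (‖v‖ ^ 2) :=
      CStarAlgebra.mul_star_le_algebraMap_norm_sq
    have h3 := star_right_conjugate_le_conjugate h2 U
    rw [← h1] at h3
    refine h3.trans_eq ?_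
    rw [hUstar, Algebra.algebraMap_eq_smul_one, mul_smul_comm, smul_mul_assoc, mul_one]
  have hUsq : U * U ≤ U := by
    have h := CStarAlgebra.pow_antitone hU0 hUle1 (by norm_num : (1:ℕ) ≤ 2)
    simp only at h
    rwa [pow_two, pow_one] at h
  have hYle : Y * star Y ≤ ‖v‖ ^ 2 • U :=
    hYsY.trans (aux_smul_le (by positivity) hUsq)
  -- `1 ≤ K • (U + p)` with `K = 2 + 2 * ‖v‖ ^ 2`
  set K : ℝ := 2 + 2 * ‖v‖ ^ 2 with hK
  have hKpos : (0 : ℝ) < K := by positivity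
  have hone_le : (1 : 𝓜(ℂ, A)) ≤ K • (U + p) := by
    have hmid : c * star Y + Y * star c ≤ p + Y * star Y := by
      have h := mul_star_self_nonneg (c - Y)
      have hexp : (c - Y) * star (c - Y)
          = (p + Y * star Y) - (c * star Y + Y * star c) := by
        rw [hp, star_sub]; noncomm_ring
      rw [hexp] at h
      exact sub_nonneg.mp h
    have hexpand : (1 : 𝓜(ℂ, A)) = p + (c * star Y + Y * star c) + Y * star Y := by
      have : (1 : 𝓜(ℂ, A)) = (c + Y) * star (c + Y) := by
        rw [hcY, star_one, mul_one]
      rw [this, star_add, hp]; noncomm_ring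
    have step1 : (1 : 𝓜(ℂ, A)) ≤ p + (p + Y * star Y) + Y * star Y := by
      rw [hexpand]
      exact add_le_add_left (add_le_add_right hmid p) _
    have step2 : p + (p + Y * star Y) + Y * star Y
        ≤ p + (p + ‖v‖ ^ 2 • U) + ‖v‖ ^ 2 • U :=
      add_le_add (add_le_add_right (add_le_add_right hYle p) p) hYle
    have step3 : p + (p + ‖v‖ ^ 2 • U) + ‖v‖ ^ 2 • U ≤ K • (U + p) := by
      have hpK : p + p ≤ K • p := by
        have : ((2 : ℝ) • p : 𝓜(ℂ, A)) ≤ K • p := by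
          have h0 : (0 : 𝓜(ℂ, A)) ≤ (K - 2) • p := by
            have hK2 : K - 2 = 2 * ‖v‖ ^ 2 := by rw [hK]; ring
            rw [hK2]
            exact aux_smul_nonneg (by positivity) hp0
          have : K • p - (2:ℝ) • p = (K - 2) • p := by rw [sub_smul]
          rw [← sub_nonneg, this]; exact h0
        calc p + p = (2 : ℝ) • p := (two_smul ℝ p).symm
          _ ≤ K • p := this
      have hUK : ‖v‖ ^ 2 • U + ‖v‖ ^ 2 • U ≤ K • U := by
        have : ((2 * ‖v‖ ^ 2 : ℝ) • U : 𝓜(ℂ, A)) ≤ K • U := by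
          have h0 : (0 : 𝓜(ℂ, A)) ≤ (K - 2 * ‖v‖ ^ 2) • U := by
            have : K - 2 * ‖v‖ ^ 2 = 2 := by rw [hK]; ring
            rw [this]
            exact aux_smul_nonneg (by norm_num) hU0
          have heq : K • U - (2 * ‖v‖ ^ 2 : ℝ) • U = (K - 2 * ‖v‖ ^ 2) • U := by
            rw [sub_smul]
          rw [← sub_nonneg, heq]; exact h0
        calc ‖v‖ ^ 2 • U + ‖v‖ ^ 2 • U = (2 * ‖v‖ ^ 2 : ℝ) • U := by
              rw [two_mul, add_smul]
          _ ≤ K • U := this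
      calc p + (p + ‖v‖ ^ 2 • U) + ‖v‖ ^ 2 • U
          = (p + p) + (‖v‖ ^ 2 • U + ‖v‖ ^ 2 • U) := by abel
        _ ≤ K • p + K • U := add_le_add hpK hUK
        _ = K • (U + p) := by rw [← smul_add, add_comm p U]
    exact (step1.trans step2).trans step3
  have hlow : (K⁻¹ : ℝ) • (1 : 𝓜(ℂ, A)) ≤ U + p := by
    have := aux_smul_le (le_of_lt (inv_pos.mpr hKpos)) hone_le
    rwa [smul_smul, inv_mul_cancel₀ hKpos.ne', one_smul] at this
  -- choose the scaling
  set n : ℝ := ‖c‖ ^ 2 with hn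
  set τ : ℝ := 1 / (2 * (1 + n)) with hτ
  have hn0 : (0 : ℝ) ≤ n := by positivity
  have hτpos : (0 : ℝ) < τ := by rw [hτ]; positivity
  have hτle : τ ≤ 1/2 := by
    rw [hτ, div_le_div_iff₀ (by positivity) (by norm_num)]
    nlinarith
  have hτn : τ * n ≤ 1/2 := by
    rw [hτ, div_mul_eq_mul_div, div_le_div_iff₀ (by positivity) (by norm_num)]
    nlinarith
  set q : 𝓜(ℂ, A) := τ • p with hq
  have hqQ : q ∈ Q := by
    have : q = ((τ : ℂ) • (1 : 𝓜(ℂ, A))) * p := by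
      rw [smul_mul_assoc, one_mul, hq, Complex.coe_smul]
    rw [this]
    exact Q.mul_mem_left _ _ hpQ
  have hq0 : (0 : 𝓜(ℂ, A)) ≤ q := aux_smul_nonneg hτpos.le hp0
  have hqup : q ≤ algebraMap ℝ 𝓜(ℂ, A) (1/2) := by
    have h1 : p ≤ algebraMap ℝ 𝓜(ℂ, A) n := by
      rw [hn]; exact CStarAlgebra.mul_star_le_algebraMap_norm_sq
    have h2 : q ≤ τ • algebraMap ℝ 𝓜(ℂ, A) n := aux_smul_le hτpos.le h1
    refine h2.trans ?_
    rw [Algebra.algebraMap_eq_smul_one, Algebra.algebraMap_eq_smul_one, smul_smul]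
    have h0 : (0 : 𝓜(ℂ, A)) ≤ (1/2 - τ * n) • (1 : 𝓜(ℂ, A)) :=
      aux_smul_nonneg (by linarith) zero_le_one
    have heq : (1/2 : ℝ) • (1 : 𝓜(ℂ, A)) - (τ * n) • 1 = (1/2 - τ * n) • 1 := by
      rw [sub_smul]
    rw [← sub_nonneg, heq]; exact h0
  -- lower bound for `U + q`
  set δ : ℝ := τ * K⁻¹ with hδ
  have hδpos : (0 : ℝ) < δ := by
    rw [hδ]; positivity
  have hδle : δ ≤ 1/4 := by
    rw [hδ]
    have hKinv : K⁻¹ ≤ 1/2 := by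
      rw [inv_le_comm₀ hKpos (by norm_num)]
      rw [hK]; nlinarith
    calc τ * K⁻¹ ≤ (1/2) * (1/2) := by
          apply mul_le_mul hτle hKinv (le_of_lt (inv_pos.mpr hKpos)) (by norm_num)
      _ = 1/4 := by norm_num
  have hUq_low : algebraMap ℝ 𝓜(ℂ, A) δ ≤ U + q := by
    have h1 : τ • (U + p) ≤ U + q := by
      have hτU : τ • U ≤ U := by
        have h0 : (0 : 𝓜(ℂ, A)) ≤ (1 - τ) • U := aux_smul_nonneg (by linarith) hU0
        have heq : (1 - τ) • U = U - τ • U := by rw [sub_smul, one_smul]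
        rw [heq] at h0
        exact sub_nonneg.mp h0
      rw [smul_add, hq]
      exact add_le_add_left hτU q
    have h2 : τ • ((K⁻¹ : ℝ) • (1 : 𝓜(ℂ, A))) ≤ τ • (U + p) := aux_smul_le hτpos.le hlow
    have h3 : algebraMap ℝ 𝓜(ℂ, A) δ = τ • ((K⁻¹ : ℝ) • (1 : 𝓜(ℂ, A))) := by
      rw [Algebra.algebraMap_eq_smul_one, hδ, smul_smul]
    rw [h3]
    exact h2.trans h1
  -- conclude
  set y : 𝓜(ℂ, A) := 1 - U - q with hy
  have hqsa : star q = q := by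
    rw [hq, star_smul, star_trivial, hpsa]
  have hysa : IsSelfAdjoint y := by
    rw [IsSelfAdjoint, hy, star_sub, star_sub, star_one, hUstar, hqsa]
  set r : ℝ := 1 - δ with hr
  have hrlt : r < 1 := by rw [hr]; linarith
  have hy_up : y ≤ algebraMap ℝ 𝓜(ℂ, A) r := by
    have : algebraMap ℝ 𝓜(ℂ, A) r = 1 - algebraMap ℝ 𝓜(ℂ, A) δ := by
      rw [hr, map_sub, map_one]
    rw [this, hy]
    have := hUq_low
    calc (1 : 𝓜(ℂ, A)) - U - q = 1 - (U + q) := by rw [sub_sub]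
      _ ≤ 1 - algebraMap ℝ 𝓜(ℂ, A) δ := by
          exact sub_le_sub_left hUq_low 1
  have hy_low : -(algebraMap ℝ 𝓜(ℂ, A) r) ≤ y := by
    have hUq_up : U + q ≤ 1 + algebraMap ℝ 𝓜(ℂ, A) r := by
      have h2 : algebraMap ℝ 𝓜(ℂ, A) (1/2) ≤ algebraMap ℝ 𝓜(ℂ, A) r := by
        have h0 : (0 : 𝓜(ℂ, A)) ≤ (r - 1/2) • (1 : 𝓜(ℂ, A)) :=
          aux_smul_nonneg (by rw [hr]; linarith) zero_le_one
        rw [Algebra.algebraMap_eq_smul_one, Algebra.algebraMap_eq_smul_one, ← sub_nonneg]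
        calc (0 : 𝓜(ℂ, A)) ≤ (r - 1/2) • (1 : 𝓜(ℂ, A)) := h0
          _ = r • (1 : 𝓜(ℂ, A)) - (1/2 : ℝ) • 1 := by rw [sub_smul]
      exact add_le_add hUle1 (hqup.trans h2)
    have : y = 1 - (U + q) := by rw [hy, sub_sub]
    rw [this, neg_le, neg_sub]
    calc (U + q) - 1 ≤ (1 + algebraMap ℝ 𝓜(ℂ, A) r) - 1 := sub_le_sub_right hUq_up 1
      _ = algebraMap ℝ 𝓜(ℂ, A) r := by rw [add_sub_cancel_left]
  have hnorm : ‖y‖ < 1 := aux_norm_lt_one hysa hy_up hy_low hrlt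
  exact ⟨q, hqQ, hnorm⟩
end
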